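/- Let F be a simplicial presheaf on a small category C which has free degeneracies with splitting presheaves N_k. Then F is the colimit of a sequence sk₀F → sk₁F → sk₂F → ⋯, where sk₀F = N₀ and for each n ≥ 1 the object sk_n F is obtained from sk_{n−1}F by a pushout square: sk_n F is the pushout of sk_{n−1}F ← N_n ⊗ ∂Δⁿ → N_n ⊗ Δⁿ. -/

import Mathlib

open CategoryTheory CategoryTheory.Limits

universe w v u v' u'

namespace Paper

/-- `f` is a retract of `g` in the arrow category. -/
def IsRetractOf {M : Type u} [Category.{v} M] {X Y X' Y' : M}
    (f : X ⟶ Y) (g : X' ⟶ Y') : Prop :=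
  ∃ (i : X ⟶ X') (r : X' ⟶ X) (j : Y ⟶ Y') (s : Y' ⟶ Y),
    i ≫ r = 𝟙 X ∧ j ≫ s = 𝟙 Y ∧ i ≫ g = f ≫ j ∧ g ≫ s = r ≫ f

/-- The class of maps having the left lifting property against every map in `P`. -/
def llp {M : Type u} [Category.{v} M] (P : MorphismProperty M) : MorphismProperty M :=
  fun _ _ i => ∀ ⦃X Y : M⦄ (p : X ⟶ Y), P p → HasLiftingProperty i p

/-- The class of maps having the right lifting property against every map in `P`. -/
def rlp {M : Type u} [Category.{v} M] (P : MorphismProperty M) : MorphismProperty M :=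
  fun _ _ p => ∀ ⦃A B : M⦄ (i : A ⟶ B), P i → HasLiftingProperty i p

/-- A (closed) model structure on a category: classes of weak equivalences,
cofibrations and fibrations satisfying Quillen's axioms (in the `closed` form,
where the cofibrations are determined by lifting against trivial fibrations and
the fibrations by lifting against trivial cofibrations). -/
structure ModelStructure (M : Type u) [Category.{v} M] : Type (max u v) where
  W : MorphismProperty M
  Cof : MorphismProperty M
  Fib : MorphismProperty M
  w_of_isIso : ∀ {X Y : M} (f : X ⟶ Y), IsIso f → W f
  w_comp : ∀ {X Y Z : M} (f : X ⟶ Y) (g : Y ⟶ Z), W f → W g → W (f ≫ g)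
  w_cancel_left : ∀ {X Y Z : M} (f : X ⟶ Y) (g : Y ⟶ Z), W g → W (f ≫ g) → W f
  w_cancel_right : ∀ {X Y Z : M} (f : X ⟶ Y) (g : Y ⟶ Z), W f → W (f ≫ g) → W g
  w_retract : ∀ {X Y X' Y' : M} (f : X ⟶ Y) (g : X' ⟶ Y'),
    IsRetractOf f g → W g → W f
  cof_eq_llp : Cof = llp (fun _ _ p => Fib p ∧ W p)
  fib_eq_rlp : Fib = rlp (fun _ _ i => Cof i ∧ W i)
  factor_cof_trivFib : ∀ {X Y : M} (f : X ⟶ Y),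
    ∃ (Z : M) (i : X ⟶ Z) (p : Z ⟶ Y), Cof i ∧ Fib p ∧ W p ∧ i ≫ p = f
  factor_trivCof_fib : ∀ {X Y : M} (f : X ⟶ Y),
    ∃ (Z : M) (i : X ⟶ Z) (p : Z ⟶ Y), Cof i ∧ W i ∧ Fib p ∧ i ≫ p = f

variable {M : Type u} [Category.{v} M] {N : Type u'} [Category.{v'} N]

/-- An object is cofibrant if the map from the initial object is a cofibration. -/
def ModelStructure.Cofibrant [HasInitial M] (σ : ModelStructure M) (X : M) : Prop :=
  σ.Cof (initial.to X)

/-- An object is fibrant if the map to the terminal object is a fibration. -/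
def ModelStructure.Fibrant [HasTerminal M] (σ : ModelStructure M) (X : M) : Prop :=
  σ.Fib (terminal.from X)

/-- A Quillen pair (map of model categories), regarded in the direction of the
left adjoint. -/
structure QuillenPair (σM : ModelStructure M) (σN : ModelStructure N) where
  L : M ⥤ N
  R : N ⥤ M
  adj : L ⊣ R
  l_cof : ∀ {A B : M} (f : A ⟶ B), σM.Cof f → σN.Cof (L.map f)
  l_trivCof : ∀ {A B : M} (f : A ⟶ B), σM.Cof f → σM.W f → σN.W (L.map f)

/-- A Quillen pair is a Quillen equivalence if for every cofibrant `X` and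
fibrant `Y`, a map `L X ⟶ Y` is a weak equivalence iff its adjoint
`X ⟶ R Y` is. -/
def QuillenPair.IsQuillenEquivalence [HasInitial M] [HasTerminal N]
    {σM : ModelStructure M} {σN : ModelStructure N}
    (Q : QuillenPair σM σN) : Prop :=
  ∀ (X : M) (Y : N), σM.Cofibrant X → σN.Fibrant Y →
    ∀ (f : Q.L.obj X ⟶ Y), σN.W f ↔ σM.W ((Q.adj.homEquiv X Y) f)

end Paper

namespace Paper
open SSet

/-- Kan fibrations of simplicial sets: right lifting property against horn inclusions. -/
def kanFibration : MorphismProperty SSet.{w} :=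
  fun _ _ p => ∀ (n : ℕ) (i : Fin (n + 1)), HasLiftingProperty ((SSet.horn.{w} n i).ι) p

/-- Trivial Kan fibrations: right lifting property against boundary inclusions. -/
def trivialKanFibration : MorphismProperty SSet.{w} :=
  fun _ _ p => ∀ (n : ℕ), HasLiftingProperty ((SSet.boundary.{w} n).ι) p

/-- Weak homotopy equivalences of simplicial sets: maps which factor as a map
with the left lifting property against all Kan fibrations followed by a trivial
Kan fibration. (In the standard Quillen model structure every weak equivalence
factors as a trivial cofibration followed by a trivial fibration, and any such
composite is a weak equivalence, so this is exactly the usual class of weak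
equivalences.) -/
def sSetWeakEquiv : MorphismProperty SSet.{w} :=
  fun X Y f => ∃ (Z : SSet.{w}) (i : X ⟶ Z) (p : Z ⟶ Y),
    llp kanFibration i ∧ trivialKanFibration p ∧ i ≫ p = f

/-- A simplicial set is weakly contractible if the map to the terminal object
is a weak homotopy equivalence. -/
def WeaklyContractibleSSet (X : SSet.{w}) : Prop :=
  sSetWeakEquiv (terminal.from X)

/-- A category is contractible if its nerve is a weakly contractible
simplicial set. -/
def ContractibleCat (D : Type u) [Category.{v} D] : Prop :=
  WeaklyContractibleSSet (nerve D)

/-- The discrete (constant) simplicial set on a set. -/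
def discreteSSet : Type w ⥤ SSet.{w} := Functor.const SimplexCategoryᵒᵖ

/-- The model structure `σ` on a category of simplicial diagrams `D ⥤ sSet` is
the Bousfield–Kan (projective) model structure: weak equivalences and
fibrations are objectwise. (The cofibrations are then determined by the axiom
`cof_eq_llp`.) -/
def IsBKStructure {D : Type u} [Category.{v} D] (σ : ModelStructure (D ⥤ SSet.{w})) : Prop :=
  (∀ {F G : D ⥤ SSet.{w}} (f : F ⟶ G), σ.W f ↔ ∀ X : D, sSetWeakEquiv (f.app X)) ∧
  (∀ {F G : D ⥤ SSet.{w}} (f : F ⟶ G), σ.Fib f ↔ ∀ X : D, kanFibration (f.app X))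

/-- The canonical embedding `r : C ⥤ UC` of `C` into its universal model
category: the Yoneda embedding followed by the inclusion of presheaves of sets
as discrete simplicial presheaves. -/
def rEmbed (C : Type u) [Category.{w} C] : C ⥤ (Cᵒᵖ ⥤ SSet.{w}) :=
  yoneda ⋙ (Functor.whiskeringRight Cᵒᵖ (Type w) SSet.{w}).obj discreteSSet

end Paper
open CategoryTheory CategoryTheory.Limits Opposite

namespace Paper
universe v₃ u₃
variable {M : Type u₃} [Category.{v₃} M]

/-- The latching diagram of a cosimplicial object at `[n]`: the diagram indexed
by the non-identity monomorphisms `[k] ↪ [n]` of `SimplexCategory`. -/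
def latchingDiagram (X : SimplexCategory ⥤ M) (n : SimplexCategory) :
    ObjectProperty.FullSubcategory (fun f : Over n => Mono f.hom ∧ ¬ IsIso f.hom) ⥤ M :=
  ObjectProperty.ι _ ⋙ Over.forget n ⋙ X

/-- The canonical cocone on the latching diagram with vertex `X^n`. -/
def latchingCocone (X : SimplexCategory ⥤ M) (n : SimplexCategory) :
    Cocone (latchingDiagram X n) where
  pt := X.obj n
  ι :=
    { app := fun f => X.map f.obj.hom
      naturality := by
        intro f g e
        dsimp [latchingDiagram]
        simp only [← X.map_comp, Over.w e.hom, Category.comp_id] }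

/-- The canonical map from the latching object `L^n X` to `X^n`. -/
noncomputable def latchingMap [HasColimitsOfSize.{0,0} M] (X : SimplexCategory ⥤ M)
    (n : SimplexCategory) : colimit (latchingDiagram X n) ⟶ X.obj n :=
  colimit.desc _ (latchingCocone X n)

/-- A cosimplicial object is Reedy cofibrant if each latching map is a cofibration. -/
def ReedyCofibrant [HasColimitsOfSize.{0,0} M] (σ : ModelStructure M)
    (X : SimplexCategory ⥤ M) : Prop :=
  ∀ n : SimplexCategory, σ.Cof (latchingMap X n)

/-- The matching diagram of a simplicial object at `[n]`: indexed by the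
non-identity monomorphisms `[k] ↪ [n]`. -/
def matchingDiagram (X : SimplexCategoryᵒᵖ ⥤ M) (n : SimplexCategory) :
    (ObjectProperty.FullSubcategory (fun f : Over n => Mono f.hom ∧ ¬ IsIso f.hom))ᵒᵖ ⥤ M :=
  (ObjectProperty.ι _ ⋙ Over.forget n).op ⋙ X

/-- The canonical cone on the matching diagram with vertex `X_n`. -/
def matchingCone (X : SimplexCategoryᵒᵖ ⥤ M) (n : SimplexCategory) :
    Cone (matchingDiagram X n) where
  pt := X.obj (op n)
  π :=
    { app := fun f => X.map f.unop.obj.hom.op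
      naturality := by
        intro f g e
        dsimp [matchingDiagram]
        simp only [Category.id_comp, ← X.map_comp, ← op_comp, Over.w e.unop.hom] }

/-- The canonical map from `X_n` to the matching object `M_n X`. -/
noncomputable def matchingMap [HasLimitsOfSize.{0,0} M] (X : SimplexCategoryᵒᵖ ⥤ M)
    (n : SimplexCategory) : X.obj (op n) ⟶ limit (matchingDiagram X n) :=
  limit.lift _ (matchingCone X n)

/-- A simplicial object is Reedy fibrant if each matching map is a fibration. -/
def ReedyFibrant [HasLimitsOfSize.{0,0} M] (σ : ModelStructure M)
    (X : SimplexCategoryᵒᵖ ⥤ M) : Prop :=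
  ∀ n : SimplexCategory, σ.Fib (matchingMap X n)

end Paper

namespace Paper
universe w₆ v₆ u₆ v₇ u₇ v₈ u₈
variable {M : Type u₆} [Category.{v₆} M] {N : Type u₇} [Category.{v₇} N]
  {P : Type u₈} [Category.{v₈} P]

/-- Composition of Quillen pairs. -/
def QuillenPair.comp {σM : ModelStructure M} {σN : ModelStructure N} {σP : ModelStructure P}
    (Q : QuillenPair σM σN) (Q' : QuillenPair σN σP) : QuillenPair σM σP where
  L := Q.L ⋙ Q'.L
  R := Q'.R ⋙ Q.R
  adj := Q.adj.comp Q'.adj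
  l_cof := fun f hf => Q'.l_cof _ (Q.l_cof f hf)
  l_trivCof := fun f hc hw => Q'.l_trivCof _ (Q.l_cof f hc) (Q.l_trivCof f hc hw)

/-- A model structure is left proper if the pushout of a weak equivalence along
a cofibration is a weak equivalence. -/
def LeftProper (σ : ModelStructure M) : Prop :=
  ∀ ⦃X Y Z W : M⦄ (f : X ⟶ Y) (g : X ⟶ Z) (h : Y ⟶ W) (i : Z ⟶ W),
    IsPushout f g h i → σ.W f → σ.Cof g → σ.W i

/-- The morphism property associated to a set of arrows. -/
def ofArrowSet (I : Set (Arrow M)) : MorphismProperty M :=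
  fun _ _ f => Arrow.mk f ∈ I

/-- Right lifting property against a set of arrows. -/
def rlpSet (I : Set (Arrow M)) : MorphismProperty M :=
  fun _ _ p => ∀ i ∈ I, HasLiftingProperty i.hom p

/-- A model structure is cofibrantly generated if there are (small) sets `I`
and `J` of maps such that the trivial fibrations are the maps with the right
lifting property against `I`, and the fibrations are the maps with the right
lifting property against `J`. -/
def CofibrantlyGenerated (σ : ModelStructure M) : Prop :=
  ∃ (I J : Set (Arrow M)), Small.{v₆} I ∧ Small.{v₆} J ∧
    (∀ ⦃X Y : M⦄ (p : X ⟶ Y), (σ.Fib p ∧ σ.W p) ↔ rlpSet I p) ∧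
    (∀ ⦃X Y : M⦄ (p : X ⟶ Y), σ.Fib p ↔ rlpSet J p)

/-- A category with a chosen cardinal `κ` is `κ`-filtered if every diagram of
size `< κ` admits a cocone. -/
def IsCardinalFiltered (J : Type v₆) [SmallCategory J] (κ : Cardinal.{v₆}) : Prop :=
  ∀ (K : Type v₆) (_ : SmallCategory K),
    Cardinal.mk (Σ (p : K × K), p.1 ⟶ p.2) < κ → ∀ F : K ⥤ J, Nonempty (Cocone F)

/-- An object is `κ`-presentable (small with respect to `κ`-filtered colimits)
if its Hom functor preserves `κ`-filtered colimits. -/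
def IsPresentable (κ : Cardinal.{v₆}) (X : M) : Prop :=
  ∀ (J : Type v₆) (_ : SmallCategory J), IsCardinalFiltered J κ →
    Nonempty (PreservesColimitsOfShape J (coyoneda.obj (op X)))

/-- A category is locally presentable if there are a regular cardinal `λ` and a
small set `A` of `λ`-presentable objects such that every object is a
`λ`-filtered colimit of objects of `A`. -/
def LocallyPresentable (M : Type u₆) [Category.{v₆} M] : Prop :=
  ∃ (κ : Cardinal.{v₆}), κ.IsRegular ∧ ∃ (A : Set M), Small.{v₆} A ∧
    (∀ X ∈ A, IsPresentable κ X) ∧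
    (∀ X : M, ∃ (J : Type v₆) (_ : SmallCategory J), IsCardinalFiltered J κ ∧
      ∃ (D : J ⥤ M) (_ : ∀ j, D.obj j ∈ A) (c : Cocone D), Nonempty (IsColimit c) ∧
        Nonempty (c.pt ≅ X))

/-- A model category is combinatorial if it is cofibrantly generated and its
underlying category is locally presentable. -/
def IsCombinatorial (σ : ModelStructure M) : Prop :=
  CofibrantlyGenerated σ ∧ LocallyPresentable M

end Paper

namespace Paper
universe v₉ u₉
variable {M : Type u₉} [Category.{v₉} M]

/-- The simplicial function complex `M(Γ^•, W)` determined by a cosimplicial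
object `Γ` and an object `W`. -/
def homComplex (Γ : SimplexCategory ⥤ M) (W : M) : SSet.{v₉} :=
  Γ.op ⋙ yoneda.obj W

/-- A cosimplicial resolution of a map `f : A ⟶ B`: cosimplicial resolutions of
`A` and `B` together with a map between them lifting `f`. -/
structure CosimpResolutionOfMap [HasColimitsOfSize.{0,0} M] (σ : ModelStructure M)
    {A B : M} (f : A ⟶ B) where
  ΓA : SimplexCategory ⥤ M
  ΓB : SimplexCategory ⥤ M
  reedyA : ReedyCofibrant σ ΓA
  reedyB : ReedyCofibrant σ ΓB
  εA : ΓA ⟶ (Functor.const SimplexCategory).obj A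
  εB : ΓB ⟶ (Functor.const SimplexCategory).obj B
  weqA : ∀ n : SimplexCategory, σ.W (εA.app n)
  weqB : ∀ n : SimplexCategory, σ.W (εB.app n)
  Γf : ΓA ⟶ ΓB
  compat : Γf ≫ εB = εA ≫ (Functor.const SimplexCategory).map f

/-- The map of homotopy function complexes `M(ΓB, X) ⟶ M(ΓA, X)` induced by a
cosimplicial resolution of a map. -/
def CosimpResolutionOfMap.inducedMap [HasColimitsOfSize.{0,0} M] {σ : ModelStructure M}
    {A B : M} {f : A ⟶ B} (ρ : CosimpResolutionOfMap σ f) (X : M) :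
    homComplex ρ.ΓB X ⟶ homComplex ρ.ΓA X :=
  Functor.whiskerRight (NatTrans.op ρ.Γf) (yoneda.obj X)

/-- An object `X` is `S`-local if it is fibrant and sees every map of `S` as a
weak equivalence, as measured by homotopy function complexes. -/
def SLocal [HasColimitsOfSize.{0,0} M] [HasTerminal M] (σ : ModelStructure M)
    (S : MorphismProperty M) (X : M) : Prop :=
  σ.Fibrant X ∧ ∀ ⦃A B : M⦄ (f : A ⟶ B), S f →
    ∀ ρ : CosimpResolutionOfMap σ f, sSetWeakEquiv (ρ.inducedMap X)

/-- A map is an `S`-local equivalence if every `S`-local object sees it as a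
weak equivalence. -/
def SLocalEquiv [HasColimitsOfSize.{0,0} M] [HasTerminal M] (σ : ModelStructure M)
    (S : MorphismProperty M) : MorphismProperty M :=
  fun _ _ f => ∀ X : M, SLocal σ S X →
    ∀ ρ : CosimpResolutionOfMap σ f, sSetWeakEquiv (ρ.inducedMap X)

/-- `σS` is the (left) Bousfield localization of `σ` at `S`: same underlying
category, same cofibrations, and the weak equivalences are the `S`-local
equivalences. -/
def IsBousfieldLocalization [HasColimitsOfSize.{0,0} M] [HasTerminal M]
    (σ σS : ModelStructure M) (S : MorphismProperty M) : Prop :=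
  σS.Cof = σ.Cof ∧ ∀ ⦃A B : M⦄ (f : A ⟶ B), (σS.W f ↔ SLocalEquiv σ S f)

end Paper

namespace Paper
universe vₐ uₐ vᵦ uᵦ
variable {M : Type uₐ} [Category.{vₐ} M] {N : Type uᵦ} [Category.{vᵦ} N]

/-- A Quillen homotopy between two Quillen pairs: a natural transformation of
left adjoints which is a weak equivalence on all cofibrant objects. -/
def QuillenHomotopy [HasInitial M] {σM : ModelStructure M} {σN : ModelStructure N}
    (Q₁ Q₂ : QuillenPair σM σN) : Prop :=
  ∃ t : Q₁.L ⟶ Q₂.L, ∀ X : M, σM.Cofibrant X → σN.W (t.app X)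

/-- Two Quillen pairs are Quillen-homotopic if they are connected by a zig-zag
of Quillen homotopies. -/
def QuillenHomotopic [HasInitial M] {σM : ModelStructure M} {σN : ModelStructure N}
    (Q₁ Q₂ : QuillenPair σM σN) : Prop :=
  Relation.ReflTransGen (fun A B => QuillenHomotopy A B ∨ QuillenHomotopy B A) Q₁ Q₂

/-- The left derived functor of the left adjoint of a Quillen pair takes the
map `f` to a weak equivalence: applying the left adjoint to any lift of `f`
to cofibrant replacements yields a weak equivalence. -/
def DerivedImageWeq [HasInitial M] {σM : ModelStructure M} {σN : ModelStructure N}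
    (Q : QuillenPair σM σN) {A B : M} (f : A ⟶ B) : Prop :=
  ∀ (A' B' : M) (pA : A' ⟶ A) (pB : B' ⟶ B) (f' : A' ⟶ B'),
    σM.Cofibrant A' → σM.Cofibrant B' → σM.Fib pA → σM.W pA → σM.Fib pB → σM.W pB →
    f' ≫ pB = pA ≫ f → σN.W (Q.L.map f')

end Paper

namespace Paper
universe w₁ w₂ w₃

/-- The levelwise product of two simplicial sets. -/
def sProd (X Y : SSet.{w₁}) : SSet.{w₁} where
  obj n := X.obj n × Y.obj n
  map α := TypeCat.ofHom (Prod.map (X.map α) (Y.map α))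
  map_id n := by
    ext x <;> simp
  map_comp f g := by
    ext x <;> simp

/-- Product of maps of simplicial sets. -/
def sProdMap {X X' Y Y' : SSet.{w₁}} (f : X ⟶ X') (g : Y ⟶ Y') :
    sProd X Y ⟶ sProd X' Y' where
  app n := TypeCat.ofHom (Prod.map (f.app n) (g.app n))
  naturality m n α := by
    ext x
    apply Prod.ext
    · exact NatTrans.naturality_apply f α x.1
    · exact NatTrans.naturality_apply g α x.2

@[simp] lemma sProdMap_id {X Y : SSet.{w₁}} : sProdMap (𝟙 X) (𝟙 Y) = 𝟙 (sProd X Y) := rfl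

@[simp] lemma sProdMap_comp {X X' X'' Y Y' Y'' : SSet.{w₁}}
    (f : X ⟶ X') (f' : X' ⟶ X'') (g : Y ⟶ Y') (g' : Y' ⟶ Y'') :
    sProdMap (f ≫ f') (g ≫ g') = sProdMap f g ≫ sProdMap f' g' := rfl

/-- Projection onto the first factor. -/
def sProdFst {X Y : SSet.{w₁}} : sProd X Y ⟶ X where
  app n := TypeCat.ofHom Prod.fst

/-- The tensor `F ⊗ K` of a simplicial presheaf with a simplicial set,
given objectwise by `(F ⊗ K)(c) = F(c) × K`. -/
def tensorUC {C : Type w₂} [Category.{w₃} C] (F : Cᵒᵖ ⥤ SSet.{w₁}) (K : SSet.{w₁}) :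
    Cᵒᵖ ⥤ SSet.{w₁} where
  obj c := sProd (F.obj c) K
  map g := sProdMap (F.map g) (𝟙 K)
  map_id c := by
    show sProdMap (F.map (𝟙 c)) (𝟙 K) = 𝟙 (sProd (F.obj c) K)
    rw [F.map_id]; exact sProdMap_id
  map_comp f g := by
    show sProdMap (F.map (f ≫ g)) (𝟙 K) = sProdMap (F.map f) (𝟙 K) ≫ sProdMap (F.map g) (𝟙 K)
    rw [F.map_comp, ← Category.comp_id (𝟙 K)]; exact sProdMap_comp _ _ _ _

/-- Functoriality of the tensor in both variables. -/
def tensorUCMap {C : Type w₂} [Category.{w₃} C] {F F' : Cᵒᵖ ⥤ SSet.{w₁}}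
    {K K' : SSet.{w₁}} (u : F ⟶ F') (v : K ⟶ K') : tensorUC F K ⟶ tensorUC F' K' where
  app c := sProdMap (u.app c) v
  naturality c c' g := by
    ext n x
    have h := ConcreteCategory.congr_hom (congrArg (fun t => NatTrans.app t n) (u.naturality g)) x.1
    exact Prod.ext h rfl

@[simp] lemma tensorUCMap_id {C : Type w₂} [Category.{w₃} C] {F : Cᵒᵖ ⥤ SSet.{w₁}}
    {K : SSet.{w₁}} : tensorUCMap (𝟙 F) (𝟙 K) = 𝟙 (tensorUC F K) := rfl

@[simp] lemma tensorUCMap_comp {C : Type w₂} [Category.{w₃} C]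
    {F F' F'' : Cᵒᵖ ⥤ SSet.{w₁}} {K K' K'' : SSet.{w₁}}
    (u : F ⟶ F') (u' : F' ⟶ F'') (v : K ⟶ K') (v' : K' ⟶ K'') :
    tensorUCMap (u ≫ u') (v ≫ v') = tensorUCMap u v ≫ tensorUCMap u' v' := rfl

/-- Projection `F ⊗ K ⟶ F`. -/
def tensorUCFst {C : Type w₂} [Category.{w₃} C] {F : Cᵒᵖ ⥤ SSet.{w₁}} {K : SSet.{w₁}} :
    tensorUC F K ⟶ F where
  app c := sProdFst
  naturality c c' g := rfl

/-- The map of nerves induced by a functor. -/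
def nerveMap {D : Type w₂} [Category.{w₁} D] {E : Type w₂} [Category.{w₁} E] (G : D ⥤ E) :
    nerve D ⟶ nerve E :=
  nerveFunctor.map (X := Cat.of D) (Y := Cat.of E) G.toCatHom

end Paper

namespace Paper
open CategoryTheory CategoryTheory.Limits Opposite
universe wl wᵢ wc wch

variable {I : Type wᵢ} [SmallCategory I] {C : Type wc} [Category.{wch} C]

/-- The indexing type for the Bousfield–Kan coequalizer: arrows of `I`. -/
def ArrowIndex (I : Type wᵢ) [SmallCategory I] : Type wᵢ := Σ p : I × I, p.1 ⟶ p.2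

/-- The (universe-lifted) nerve of the opposite of the under category,
`B(a ↓ I)ᵒᵖ`. -/
def underNerve (a : I) : SSet.{max wᵢ wl} :=
  nerve (Under a)ᵒᵖ ⋙ uliftFunctor.{wl, wᵢ}

/-- Functoriality of `underNerve`. -/
def underNerveMap {a b : I} (f : a ⟶ b) : underNerve.{wl} b ⟶ underNerve.{wl} a :=
  Functor.whiskerRight (nerveMap (Under.map f).op) uliftFunctor.{wl, wᵢ}

/-- The Bousfield–Kan formula for the homotopy colimit of a diagram of
simplicial presheaves: the coequalizer of
`⨿_{a → b} D(a) ⊗ N(b ↓ I)ᵒᵖ ⇉ ⨿_a D(a) ⊗ N(a ↓ I)ᵒᵖ`. -/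
noncomputable def bkHocolim (D : I ⥤ (Cᵒᵖ ⥤ SSet.{max wᵢ wl})) : Cᵒᵖ ⥤ SSet.{max wᵢ wl} :=
  haveI : HasColimitsOfSize.{wᵢ, wᵢ} (Cᵒᵖ ⥤ SSet.{max wᵢ wl}) :=
    hasColimitsOfSizeShrink.{wᵢ, wᵢ, wl, wl} _
  coequalizer
    (Sigma.desc (fun e : ArrowIndex I =>
      (tensorUCMap (D.map e.2) (𝟙 (underNerve.{wl} e.1.2))) ≫
        Sigma.ι (fun a : I => tensorUC (D.obj a) (underNerve.{wl} a)) e.1.2))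
    (Sigma.desc (fun e : ArrowIndex I =>
      (tensorUCMap (𝟙 (D.obj e.1.1)) (underNerveMap.{wl} e.2)) ≫
        Sigma.ι (fun a : I => tensorUC (D.obj a) (underNerve.{wl} a)) e.1.1))

/-- The canonical map from the Bousfield–Kan homotopy colimit to the vertex of
any cocone on the diagram. -/
noncomputable def bkHocolimDesc (D : I ⥤ (Cᵒᵖ ⥤ SSet.{max wᵢ wl})) (c : Cocone D) :
    bkHocolim.{wl} D ⟶ c.pt := by
  haveI : HasColimitsOfSize.{wᵢ, wᵢ} (Cᵒᵖ ⥤ SSet.{max wᵢ wl}) :=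
    hasColimitsOfSizeShrink.{wᵢ, wᵢ, wl, wl} _
  refine coequalizer.desc (Sigma.desc (fun a : I => tensorUCFst ≫ c.ι.app a)) ?_
  apply Limits.Sigma.hom_ext
  intro e
  simp only [colimit.ι_desc_assoc, Cofan.mk_ι_app, Category.assoc, colimit.ι_desc]
  have h1 : (tensorUCMap (D.map e.2) (𝟙 (underNerve.{wl} e.1.2))) ≫ tensorUCFst
      = tensorUCFst ≫ D.map e.2 := rfl
  have h2 : (tensorUCMap (𝟙 (D.obj e.1.1)) (underNerveMap.{wl} e.2)) ≫ tensorUCFst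
      = tensorUCFst := rfl
  rw [reassoc_of% h1, reassoc_of% h2, c.w]

end Paper

namespace Paper
open CategoryTheory CategoryTheory.Limits Opposite
universe ww wwo vv uu

variable {C : Type wwo} [Category.{ww} C] {M : Type uu} [Category.{vv} M]

/-- A factorization of `γ : C ⥤ M` through the universal model category `UC`:
a Quillen pair `UC ⇄ M` together with a natural weak equivalence `L ∘ r ⟹ γ`. -/
structure Factorization (σU : ModelStructure (Cᵒᵖ ⥤ SSet.{ww})) (σM : ModelStructure M)
    (γ : C ⥤ M) where
  Q : QuillenPair σU σM
  η : rEmbed C ⋙ Q.L ⟶ γ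
  weq : ∀ X : C, σM.W (η.app X)

/-- The category of factorizations: a morphism is a natural transformation of
left adjoints compatible with the structure maps `η`. -/
instance {σU : ModelStructure (Cᵒᵖ ⥤ SSet.{ww})} {σM : ModelStructure M} {γ : C ⥤ M} :
    Category (Factorization σU σM γ) where
  Hom F F' := { t : F.Q.L ⟶ F'.Q.L //
    ∀ X : C, t.app ((rEmbed C).obj X) ≫ F'.η.app X = F.η.app X }
  id F := ⟨𝟙 F.Q.L, by intro X; simp⟩
  comp {F F' F''} t s := ⟨t.1 ≫ s.1, by
    intro X
    rw [NatTrans.comp_app, Category.assoc, s.2 X, t.2 X]⟩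

/-- A cosimplicial resolution of a functor `γ : C ⥤ M`: a functor `Γ` to
cosimplicial objects, objectwise Reedy cofibrant, with a levelwise weak
equivalence to the constant cosimplicial object on `γ`. -/
structure CosRes [HasColimitsOfSize.{0,0} M] (σM : ModelStructure M) (γ : C ⥤ M) where
  Γ : C ⥤ SimplexCategory ⥤ M
  reedy : ∀ X : C, ReedyCofibrant σM (Γ.obj X)
  ρ : Γ ⟶ γ ⋙ Functor.const SimplexCategory
  weq : ∀ (X : C) (n : SimplexCategory), σM.W ((ρ.app X).app n)

/-- The category of cosimplicial resolutions of `γ`. -/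
instance [HasColimitsOfSize.{0,0} M] {σM : ModelStructure M} {γ : C ⥤ M} :
    Category (CosRes σM γ) where
  Hom R R' := { t : R.Γ ⟶ R'.Γ // t ≫ R'.ρ = R.ρ }
  id R := ⟨𝟙 R.Γ, by simp⟩
  comp t s := ⟨t.1 ≫ s.1, by rw [Category.assoc, s.2, t.2]⟩

/-- The canonical embedding `C ⥤ VC` into the dual universal model category. -/
def rEmbedV (C : Type wwo) [Category.{ww} C] : C ⥤ (C ⥤ SSet.{ww})ᵒᵖ :=
  (coyoneda ⋙ (Functor.whiskeringRight C (Type ww) SSet.{ww}).obj discreteSSet).rightOp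

/-- A co-factorization of `γ : C ⥤ M` through `VC`: a Quillen pair
`M ⇄ VC` together with a natural weak equivalence `γ ⟹ R ∘ r`. -/
structure CoFactorization (σM : ModelStructure M) (σV : ModelStructure ((C ⥤ SSet.{ww})ᵒᵖ))
    (γ : C ⥤ M) where
  Q : QuillenPair σM σV
  η : γ ⟶ rEmbedV C ⋙ Q.R
  weq : ∀ X : C, σM.W (η.app X)

/-- The category of co-factorizations: a morphism is a natural transformation
of right adjoints compatible with the structure maps. -/
instance {σM : ModelStructure M} {σV : ModelStructure ((C ⥤ SSet.{ww})ᵒᵖ)} {γ : C ⥤ M} :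
    Category (CoFactorization σM σV γ) where
  Hom F F' := { t : F.Q.R ⟶ F'.Q.R //
    ∀ X : C, F.η.app X ≫ t.app ((rEmbedV C).obj X) = F'.η.app X }
  id F := ⟨𝟙 F.Q.R, by intro X; simp⟩
  comp {F F' F''} t s := ⟨t.1 ≫ s.1, by
    intro X
    rw [NatTrans.comp_app, ← Category.assoc, t.2 X, s.2 X]⟩

/-- A simplicial resolution of a functor `γ : C ⥤ M`: a functor `Φ` to
simplicial objects, objectwise Reedy fibrant, with a levelwise weak
equivalence from the constant simplicial object on `γ`. -/
structure SimpRes [HasLimitsOfSize.{0,0} M] (σM : ModelStructure M) (γ : C ⥤ M) where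
  Φ : C ⥤ SimplexCategoryᵒᵖ ⥤ M
  reedy : ∀ X : C, ReedyFibrant σM (Φ.obj X)
  ρ : γ ⋙ Functor.const SimplexCategoryᵒᵖ ⟶ Φ
  weq : ∀ (X : C) (n : SimplexCategoryᵒᵖ), σM.W ((ρ.app X).app n)

/-- The category of simplicial resolutions of `γ`. -/
instance [HasLimitsOfSize.{0,0} M] {σM : ModelStructure M} {γ : C ⥤ M} :
    Category (SimpRes σM γ) where
  Hom R R' := { t : R.Φ ⟶ R'.Φ // R.ρ ≫ t = R'.ρ }
  id R := ⟨𝟙 R.Φ, by simp⟩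
  comp t s := ⟨t.1 ≫ s.1, by rw [← Category.assoc, t.2, s.2]⟩

end Paper

namespace Paper
open CategoryTheory CategoryTheory.Limits Opposite
universe wl wi wc wch w₁ w₂

/-- A simplicial structure on a model category, making it a simplicial model
category: an action of simplicial sets (tensor), with unit and associativity
isomorphisms, right adjoints in each variable (cotensor and simplicial
enrichment), satisfying Quillen's axiom SM7 in pushout-product form. -/
structure SimplicialModel {M : Type w₂} [Category.{w₁} M] [HasPushouts M]
    (σ : ModelStructure M) where
  tensor : M ⥤ SSet.{w₁} ⥤ M
  unitIso : ∀ X : M,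
    (tensor.obj X).obj (SSet.stdSimplex.obj (SimplexCategory.mk 0)) ≅ X
  assocIso : ∀ (X : M) (K L : SSet.{w₁}),
    (tensor.obj ((tensor.obj X).obj K)).obj L ≅ (tensor.obj X).obj (sProd K L)
  cotensorAdj : ∀ K : SSet.{w₁}, (tensor.flip.obj K).IsLeftAdjoint
  enrichAdj : ∀ X : M, (tensor.obj X).IsLeftAdjoint
  sm7_cof : ∀ {A B : M} (i : A ⟶ B) {K L : SSet.{w₁}} (j : K ⟶ L),
    σ.Cof i → Mono j →
    σ.Cof (pushout.desc ((tensor.map i).app L) ((tensor.obj B).map j)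
      ((tensor.map i).naturality j) :
        pushout ((tensor.obj A).map j) ((tensor.map i).app K) ⟶ (tensor.obj B).obj L)
  sm7_triv_left : ∀ {A B : M} (i : A ⟶ B) {K L : SSet.{w₁}} (j : K ⟶ L),
    σ.Cof i → σ.W i → Mono j →
    σ.W (pushout.desc ((tensor.map i).app L) ((tensor.obj B).map j)
      ((tensor.map i).naturality j))
  sm7_triv_right : ∀ {A B : M} (i : A ⟶ B) {K L : SSet.{w₁}} (j : K ⟶ L),
    σ.Cof i → Mono j → sSetWeakEquiv j →
    σ.W (pushout.desc ((tensor.map i).app L) ((tensor.obj B).map j)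
      ((tensor.map i).naturality j))

end Paper

namespace Paper
open CategoryTheory CategoryTheory.Limits Opposite
universe wb wbo

variable {C : Type wbo} [Category.{wb} C]

/-- The inclusion of presheaves of sets into simplicial presheaves as discrete
simplicial presheaves. -/
def discretize (C : Type wbo) [Category.{wb} C] : (Cᵒᵖ ⥤ Type wb) ⥤ (Cᵒᵖ ⥤ SSet.{wb}) :=
  (Functor.whiskeringRight Cᵒᵖ (Type wb) SSet.{wb}).obj discreteSSet

/-- Evaluation of simplicial sets at a simplicial degree. -/
def evalAtΔ (n : SimplexCategoryᵒᵖ) : SSet.{wb} ⥤ Type wb :=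
  (evaluation SimplexCategoryᵒᵖ (Type wb)).obj n

/-- `f : E ⟶ B` is a cover (local epimorphism) with respect to a Grothendieck
topology: every section of `B` over `X` lifts to `E` along a covering of `X`. -/
def IsCover (J : GrothendieckTopology C) {E B : Cᵒᵖ ⥤ Type wb} (f : E ⟶ B) : Prop :=
  ∀ (X : C) (b : B.obj (op X)),
    Sieve.mk (fun {Y} (g : Y ⟶ X) => ∃ e : E.obj (op Y), f.app (op Y) e = B.map g.op b)
      (by
        intro Y Z g ⟨e, he⟩ h
        exact ⟨E.map h.op e, by rw [FunctorToTypes.naturality, he, ← FunctorToTypes.map_comp_apply, ← op_comp]⟩)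
      ∈ J X

/-- A hypercover of `X`: an augmented simplicial presheaf `U ⟶ rX` such that
every level is a coproduct of representables, `U₀ ⟶ rX` is a cover, and each
matching map `(U^{Δⁿ})₀ ⟶ (U^{∂Δⁿ})₀` is a cover. -/
structure Hypercover (J : GrothendieckTopology C) (X : C) where
  U : Cᵒᵖ ⥤ SSet.{wb}
  aug : U ⟶ (rEmbed C).obj X
  repr : ∀ n : SimplexCategoryᵒᵖ, ∃ (ι : Type wb) (Z : ι → C),
    Nonempty ((U ⋙ evalAtΔ n) ≅ ∐ (fun i => yoneda.obj (Z i)))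
  cover₀ : IsCover J
    (Functor.whiskerRight aug (evalAtΔ (op (SimplexCategory.mk 0))) :
      U ⋙ evalAtΔ _ ⟶ (rEmbed C).obj X ⋙ evalAtΔ _)
  coverMatching : ∀ n : ℕ, 1 ≤ n → IsCover J
    (Functor.whiskerLeft U (coyoneda.map (SSet.boundary.{wb} n).ι.op) :
      U ⋙ coyoneda.obj (op (SSet.stdSimplex.obj (SimplexCategory.mk n)))
        ⟶ U ⋙ coyoneda.obj (op (SSet.boundary n).toSSet))

/-- The simplicial object of discrete simplicial presheaves underlying a
simplicial presheaf. -/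
def levelsDiagram (U : Cᵒᵖ ⥤ SSet.{wb}) : SimplexCategoryᵒᵖ ⥤ (Cᵒᵖ ⥤ SSet.{wb}) :=
  U.flip ⋙ discretize C

/-- The cocone on the levels of a hypercover with vertex `rX`, given by the
augmentation. -/
def Hypercover.coconeAug {J : GrothendieckTopology C} {X : C} (H : Hypercover J X) :
    Cocone (levelsDiagram H.U) where
  pt := (rEmbed C).obj X
  ι :=
    { app := fun n => (discretize C).map
        (Functor.whiskerRight H.aug (evalAtΔ n) : H.U ⋙ evalAtΔ n ⟶ yoneda.obj X)
      naturality := by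
        intro n m α
        dsimp [levelsDiagram]
        erw [Category.comp_id, ← Functor.map_comp]
        congr 1
        ext c x
        exact ConcreteCategory.congr_hom ((H.aug.app c).naturality α) x }

/-- The canonical map `hocolim U_* ⟶ rX` associated to a hypercover. -/
noncomputable def Hypercover.hocolimMap {J : GrothendieckTopology C} {X : C}
    (H : Hypercover J X) : bkHocolim.{wb} (levelsDiagram H.U) ⟶ (rEmbed C).obj X :=
  bkHocolimDesc _ H.coconeAug

/-- The class of maps `{hocolim U_* → rX}` for all hypercovers, at which one
localizes to obtain `UC/T`. -/
def hypercoverHocolimSet (J : GrothendieckTopology C) :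
    MorphismProperty (Cᵒᵖ ⥤ SSet.{wb}) :=
  fun _ _ f => ∃ (X : C) (H : Hypercover J X), Arrow.mk f = Arrow.mk H.hocolimMap

/-- The class of hypercover augmentations `{U → rX}`. -/
def hypercoverAugSet (J : GrothendieckTopology C) :
    MorphismProperty (Cᵒᵖ ⥤ SSet.{wb}) :=
  fun _ _ f => ∃ (X : C) (H : Hypercover J X), Arrow.mk f = Arrow.mk H.aug

/-- The Heller (injective global) model structure on simplicial presheaves:
cofibrations are the monomorphisms and weak equivalences are objectwise. -/
def IsHellerStructure (σ : ModelStructure (Cᵒᵖ ⥤ SSet.{wb})) : Prop :=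
  (∀ ⦃F G : Cᵒᵖ ⥤ SSet.{wb}⦄ (f : F ⟶ G), σ.W f ↔ ∀ X : Cᵒᵖ, sSetWeakEquiv (f.app X)) ∧
  (∀ ⦃F G : Cᵒᵖ ⥤ SSet.{wb}⦄ (f : F ⟶ G), σ.Cof f ↔ Mono f)

/-- Jardine's model structure on simplicial presheaves: cofibrations are the
monomorphisms, and the weak equivalences are the local weak equivalences
(equivalently, by Dugger–Hollander–Isaksen, it is the Bousfield localization of
the Heller structure at the hypercover augmentations). -/
def IsJardineStructure (J : GrothendieckTopology C) (σJar : ModelStructure (Cᵒᵖ ⥤ SSet.{wb})) : Prop :=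
  ∃ σH : ModelStructure (Cᵒᵖ ⥤ SSet.{wb}), IsHellerStructure σH ∧
    IsBousfieldLocalization σH σJar (hypercoverAugSet J)

/-- The Quillen model structure on topological spaces: weak equivalences are
the weak homotopy equivalences (maps whose singular simplicial set map is a
weak equivalence) and fibrations are the Serre fibrations (maps whose singular
simplicial set map is a Kan fibration). -/
def IsTopModelStructure (σ : ModelStructure TopCat.{0}) : Prop :=
  (∀ ⦃X Y : TopCat.{0}⦄ (f : X ⟶ Y), σ.W f ↔ sSetWeakEquiv (TopCat.toSSet.map f)) ∧
  (∀ ⦃X Y : TopCat.{0}⦄ (f : X ⟶ Y), σ.Fib f ↔ kanFibration (TopCat.toSSet.map f))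

end Paper

namespace Paper
open CategoryTheory CategoryTheory.Limits Opposite
universe wq

variable {C : Type wq} [SmallCategory C]

/-- The category of representables over `F` mapping compatibly to `c`: objects
are pairs of an element `(X, x ∈ F(X))` and a map `X ⟶ c` in `Cᵒᵖ`. -/
abbrev ElOver (F : Cᵒᵖ ⥤ Type wq) (c : Cᵒᵖ) : Type wq :=
  CostructuredArrow (CategoryOfElements.π F) c

lemma elMapId (F : Cᵒᵖ ⥤ Type wq) (c : Cᵒᵖ) :
    CostructuredArrow.map (S := CategoryOfElements.π F) (𝟙 c) = 𝟭 _ := by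
  refine CategoryTheory.Functor.ext (fun f => CostructuredArrow.map_id) ?_
  intro X Y φ
  ext
  simp [CostructuredArrow.map, Comma.mapRight]

lemma elMapComp (F : Cᵒᵖ ⥤ Type wq) {c c' c'' : Cᵒᵖ} (g : c ⟶ c') (g' : c' ⟶ c'') :
    CostructuredArrow.map (S := CategoryOfElements.π F) (g ≫ g')
      = CostructuredArrow.map g ⋙ CostructuredArrow.map g' := by
  refine CategoryTheory.Functor.ext
    (fun f => CostructuredArrow.map_comp (f := g) (f' := g')) ?_
  intro X Y φ
  ext
  simp [CostructuredArrow.map, Comma.mapRight]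

/-- The `Cat`-valued functor `c ↦ (ElOver F c)`. -/
def elOverFunctor (F : Cᵒᵖ ⥤ Type wq) : Cᵒᵖ ⥤ Cat.{wq, wq} where
  obj c := Cat.of (ElOver F c)
  map g := (CostructuredArrow.map g).toCatHom
  map_id c := congrArg Functor.toCatHom (elMapId F c)
  map_comp g g' := congrArg Functor.toCatHom (elMapComp F g g') 

/-- The simplicial replacement `Q̃F` of a presheaf of sets `F`: the simplicial
presheaf whose `n`-th level is `⨿ rXₙ`, indexed by the strings
`rXₙ → ⋯ → rX₀ → F`; equivalently, `(Q̃F)(c)` is the nerve of `ElOver F c`. -/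
def tildeQobj (F : Cᵒᵖ ⥤ Type wq) : Cᵒᵖ ⥤ SSet.{wq} :=
  elOverFunctor F ⋙ nerveFunctor

/-- The functor `ElOver F c ⥤ ElOver G c` induced by a map `F ⟶ G`. -/
def elPush {F G : Cᵒᵖ ⥤ Type wq} (u : F ⟶ G) (c : Cᵒᵖ) : ElOver F c ⥤ ElOver G c where
  obj e := CostructuredArrow.mk (S := CategoryOfElements.π G)
    (Y := (CategoryOfElements.map u).obj e.left) e.hom
  map {e e'} φ := CostructuredArrow.homMk ((CategoryOfElements.map u).map φ.left)
    (CostructuredArrow.w φ)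

lemma elPush_id (F : Cᵒᵖ ⥤ Type wq) (c : Cᵒᵖ) : elPush (𝟙 F) c = 𝟭 _ := by
  refine CategoryTheory.Functor.ext (fun e => rfl) (fun X Y φ => ?_)
  erw [eqToHom_refl, eqToHom_refl, Category.comp_id, Category.id_comp]
  exact CostructuredArrow.hom_ext _ _ (CategoryOfElements.ext _ _ _ rfl)

lemma elPush_comp {F G H : Cᵒᵖ ⥤ Type wq} (u : F ⟶ G) (v : G ⟶ H) (c : Cᵒᵖ) :
    elPush (u ≫ v) c = elPush u c ⋙ elPush v c := by
  refine CategoryTheory.Functor.ext (fun e => rfl) (fun X Y φ => ?_)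
  erw [eqToHom_refl, eqToHom_refl, Category.comp_id, Category.id_comp]
  exact CostructuredArrow.hom_ext _ _ (CategoryOfElements.ext _ _ _ rfl)

lemma elPush_natural {F G : Cᵒᵖ ⥤ Type wq} (u : F ⟶ G) {c c' : Cᵒᵖ} (g : c ⟶ c') :
    CostructuredArrow.map g ⋙ elPush u c' = elPush u c ⋙ CostructuredArrow.map g := by
  refine CategoryTheory.Functor.ext (fun e => rfl) (fun X Y φ => ?_)
  erw [eqToHom_refl, eqToHom_refl, Category.comp_id, Category.id_comp]
  exact CostructuredArrow.hom_ext _ _ (CategoryOfElements.ext _ _ _ rfl)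

end Paper

namespace Paper
open CategoryTheory CategoryTheory.Limits Opposite
universe wr

variable {C : Type wr} [SmallCategory C]

/-- The simplicial replacement, as a functor in the presheaf `F`. -/
def tildeQFunctor (C : Type wr) [SmallCategory C] :
    (Cᵒᵖ ⥤ Type wr) ⥤ (Cᵒᵖ ⥤ SSet.{wr}) where
  obj F := tildeQobj F
  map {F G} u :=
    { app := fun c => nerveMap (elPush u c)
      naturality := fun c c' g => by
        dsimp [tildeQobj, elOverFunctor, nerveMap]
        exact congrArg (fun F => nerveFunctor.map (Functor.toCatHom F)) (elPush_natural u g) }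
  map_id F := by
    apply NatTrans.ext
    funext c
    show nerveMap (elPush (𝟙 F) c) = _
    rw [nerveMap, elPush_id]
    exact nerveFunctor.map_id (Cat.of (ElOver F c))
  map_comp {F G H} u v := by
    apply NatTrans.ext
    funext c
    show nerveMap (elPush (u ≫ v) c) = nerveMap (elPush u c) ≫ nerveMap (elPush v c)
    rw [nerveMap, elPush_comp]
    exact nerveFunctor.map_comp (X := Cat.of (ElOver F c)) (Y := Cat.of (ElOver G c))
      (Z := Cat.of (ElOver H c)) (elPush u c).toCatHom (elPush v c).toCatHom

/-- The canonical augmentation `Q̃F ⟶ F` (with `F` viewed as a discrete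
simplicial presheaf). -/
def tildeQaug (F : Cᵒᵖ ⥤ Type wr) : tildeQobj F ⟶ (discretize C).obj F where
  app c :=
    { app := fun n => TypeCat.ofHom (fun σ => F.map (σ.obj 0).hom (σ.obj 0).left.2)
      naturality := by
        intro n m α
        ext σ
        show F.map ((σ.whiskerLeft (SimplexCategory.toCat.map α.unop).toFunctor).obj 0).hom
          ((σ.whiskerLeft (SimplexCategory.toCat.map α.unop).toFunctor).obj 0).left.2 = _
        have hzero : ∀ (j : Fin (n.unop.len + 1)),
            F.map (σ.obj j).hom (σ.obj j).left.2
              = F.map (σ.obj 0).hom (σ.obj 0).left.2 := by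
          intro j
          have φ := σ.map (homOfLE (Fin.zero_le j))
          have w : φ.left.val ≫ (σ.obj j).hom = (σ.obj 0).hom := CostructuredArrow.w φ
          have e := φ.left.property
          exact (congrArg (fun x => F.map (σ.obj j).hom x) e).symm.trans (w ▸ (F.map_comp_apply _ _ _).symm)
        exact hzero _ }
  naturality := by
    intro c c' g
    apply NatTrans.ext
    funext n
    ext σ
    show F.map ((CostructuredArrow.map g).obj ((σ : ComposableArrows _ _).obj 0)).hom
      ((CostructuredArrow.map g).obj (σ.obj 0)).left.2 = _
    have : ((CostructuredArrow.map (S := CategoryOfElements.π F) g).obj (σ.obj 0)).hom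
        = (σ.obj 0).hom ≫ g := rfl
    rw [this]
    exact FunctorToTypes.map_comp_apply F _ _ _

/-- Naturality of the augmentation in `F`. -/
lemma tildeQaug_natural {F G : Cᵒᵖ ⥤ Type wr} (u : F ⟶ G) :
    (tildeQFunctor C).map u ≫ tildeQaug G = tildeQaug F ≫ (discretize C).map u := by
  apply NatTrans.ext
  funext c
  apply NatTrans.ext
  funext n
  ext σ
  show G.map ((elPush u c).obj ((σ : ComposableArrows _ _).obj 0)).hom
    ((elPush u c).obj (σ.obj 0)).left.2 = _
  exact (ConcreteCategory.congr_hom (u.naturality (σ.obj 0).hom) (σ.obj 0).left.2).symm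

end Paper

namespace Paper
open CategoryTheory CategoryTheory.Limits Opposite
universe ws

/-- The diagonal of a bisimplicial set. -/
def diagSSet : (SimplexCategoryᵒᵖ ⥤ SSet.{ws}) ⥤ SSet.{ws} :=
  Functor.uncurry ⋙ (Functor.whiskeringLeft SimplexCategoryᵒᵖ (SimplexCategoryᵒᵖ × SimplexCategoryᵒᵖ)
    (Type ws)).obj (Functor.diag SimplexCategoryᵒᵖ)

variable {C : Type ws} [SmallCategory C]

/-- The cofibrant replacement `QF` of a simplicial presheaf `F`: the diagonal
of the bisimplicial presheaf obtained by applying the simplicial replacement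
`Q̃` to `F` levelwise. -/
def bigQ (F : Cᵒᵖ ⥤ SSet.{ws}) : Cᵒᵖ ⥤ SSet.{ws} :=
  (F.flip ⋙ tildeQFunctor C).flip ⋙ diagSSet

/-- The canonical augmentation `QF ⟶ F`. -/
def bigQaug (F : Cᵒᵖ ⥤ SSet.{ws}) : bigQ F ⟶ F where
  app c :=
    { app := fun n => ((tildeQaug (F.flip.obj n)).app c).app n
      naturality := by
        intro n m α
        ext σ
        have h1 := ConcreteCategory.congr_hom (((tildeQaug (F.flip.obj m)).app c).naturality α)
          ((((tildeQFunctor C).map (F.flip.map α)).app c).app n σ)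
        have h2 := ConcreteCategory.congr_hom (congrArg (fun (t : tildeQobj (F.flip.obj n) ⟶
            ((discretize C).obj (F.flip.obj m))) => (t.app c).app n)
          (tildeQaug_natural (F.flip.map α))) σ
        exact h1.trans h2
      }
  naturality := by
    intro c c' g
    apply NatTrans.ext
    funext n
    ext σ
    exact ConcreteCategory.congr_hom (congrArg (fun t => NatTrans.app t n)
      ((tildeQaug (F.flip.obj n)).naturality g)) σ

end Paper
open CategoryTheory CategoryTheory.Limits Opposite

namespace Paper

/-- The presheaf of `k`-simplices of a simplicial presheaf. -/
def levelAt {C : Type w} [SmallCategory C] (F : Cᵒᵖ ⥤ SSet.{w}) (k : ℕ) : Cᵒᵖ ⥤ Type w :=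
  F ⋙ evalAtΔ (op (SimplexCategory.mk k))

/-- The simplicial operator `α* : F_b ⟶ F_a` induced by `α : [a] ⟶ [b]`. -/
def levelOp {C : Type w} [SmallCategory C] (F : Cᵒᵖ ⥤ SSet.{w}) {a b : SimplexCategory}
    (α : a ⟶ b) : (F ⋙ evalAtΔ (op b)) ⟶ (F ⋙ evalAtΔ (op a)) :=
  Functor.whiskerLeft F ((evaluation SimplexCategoryᵒᵖ (Type w)).map α.op)

/-- The indexing set of the degenerate part in degree `k`: surjections
`[k] ↠ [n]`. -/
def SurjIndex (k : ℕ) : Type w :=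
  Σ n : ULift.{w} ℕ, { σ : SimplexCategory.mk k ⟶ SimplexCategory.mk n.down //
    Function.Surjective σ.toOrderHom }

/-- A free degeneracy decomposition (splitting) of a simplicial presheaf `F`:
sub-presheaves `N_k ⊆ F_k` such that the canonical map
`⨿_σ N_σ ⟶ F_k`, over the surjections `σ : [k] ↠ [n]`, is an isomorphism. -/
structure FreeDegeneracies {C : Type w} [SmallCategory C] (F : Cᵒᵖ ⥤ SSet.{w}) where
  N : ℕ → (Cᵒᵖ ⥤ Type w)
  ι : ∀ k : ℕ, N k ⟶ levelAt F k
  mono : ∀ k : ℕ, Mono (ι k)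
  iso : ∀ k : ℕ, IsIso (Sigma.desc (fun s : SurjIndex.{w} k =>
    ι s.1.down ≫ levelOp F s.2.1) : (∐ fun s : SurjIndex.{w} k => N s.1.down) ⟶ levelAt F k)

end Paper

/-!
By the free-degeneracy condition every simplex `x` of `F(c)` is uniquely `σ^* y` with
`σ : [k] ↠ [n]` surjective and `y ∈ N_n(c)`; call `n` the dimension of `x`. Simplicial operators
do not raise the dimension (factor `θ^* y` through the epi-mono factorisation of `θ`), so the
simplices of dimension `≤ n` form a sub-simplicial presheaf `sk_n F`, and `F` is the union of
this chain. A simplex of `sk_{n+1} F` outside `sk_n F` is `θ^* y` for a unique surjective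
`θ : [k] ↠ [n+1]` and `y ∈ N_{n+1}`, i.e. comes from a unique simplex of `N_{n+1} ⊗ Δ^{n+1}`
outside `N_{n+1} ⊗ ∂Δ^{n+1}`, while `θ^* y` with `θ` not surjective lies in `sk_n F`. In each
degree and over each object of `C` this makes the square a pushout of sets.
-/

namespace Paper

open Simplicial

@[ext]
structure SubSimplicialPresheaf {C : Type w} [SmallCategory C] (F : Cᵒᵖ ⥤ SSet.{w}) where
  obj : ∀ (c : Cᵒᵖ) (a : SimplexCategoryᵒᵖ), Set ((F.obj c).obj a)
  map_mem : ∀ (c : Cᵒᵖ) {a b : SimplexCategoryᵒᵖ} (α : a ⟶ b) {x : (F.obj c).obj a},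
    x ∈ obj c a → (F.obj c).map α x ∈ obj c b
  app_mem : ∀ {c c' : Cᵒᵖ} (g : c ⟶ c') (a : SimplexCategoryᵒᵖ) {x : (F.obj c).obj a},
    x ∈ obj c a → (F.map g).app a x ∈ obj c' a

namespace SubSimplicialPresheaf

variable {C : Type w} [SmallCategory C] {F : Cᵒᵖ ⥤ SSet.{w}}

instance : PartialOrder (SubSimplicialPresheaf F) :=
  PartialOrder.lift obj fun _ _ => SubSimplicialPresheaf.ext

variable (S : SubSimplicialPresheaf F)

def toPresheaf : Cᵒᵖ ⥤ SSet.{w} where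
  obj c :=
    { obj a := S.obj c a
      map α := TypeCat.ofHom fun x => ⟨(F.obj c).map α x.1, S.map_mem c α x.2⟩
      map_id a := by ext x; exact (F.obj c).map_id_apply a x.1
      map_comp α β := by ext x; exact (F.obj c).map_comp_apply α β x.1 }
  map g :=
    { app a := TypeCat.ofHom fun x => ⟨(F.map g).app a x.1, S.app_mem g a x.2⟩
      naturality a b α := by ext x; exact NatTrans.naturality_apply (F.map g) α x.1 }
  map_id c := by ext a x; exact congr_arg (fun f => f.app a x.1) (F.map_id c)
  map_comp g g' := by ext a x; exact congr_arg (fun f => f.app a x.1) (F.map_comp g g')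

def ι : S.toPresheaf ⟶ F where
  app _ := { app _ := TypeCat.ofHom Subtype.val }

variable {S} in
def homOfLE {T : SubSimplicialPresheaf F} (h : S ≤ T) : S.toPresheaf ⟶ T.toPresheaf where
  app c := { app a := TypeCat.ofHom fun x => ⟨x.1, h c a x.2⟩ }

lemma injective_homOfLE_app_app {T : SubSimplicialPresheaf F} (h : S ≤ T) (c : Cᵒᵖ)
    (a : SimplexCategoryᵒᵖ) : Function.Injective (((homOfLE h).app c).app a) :=
  fun _ _ h => Subtype.ext (Subtype.ext_iff.1 h :)

def lift {G : Cᵒᵖ ⥤ SSet.{w}} (f : G ⟶ F) (hf : ∀ c a x, (f.app c).app a x ∈ S.obj c a) :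
    G ⟶ S.toPresheaf where
  app c :=
    { app a := TypeCat.ofHom fun x => ⟨(f.app c).app a x, hf c a x⟩
      naturality a b α := by
        ext x; apply Subtype.ext; exact NatTrans.naturality_apply (f.app c) α x }
  naturality c c' g := by
    ext a x; apply Subtype.ext; exact congr_arg (fun φ => φ.app a x) (f.naturality g)

def toPresheafFunctor : SubSimplicialPresheaf F ⥤ (Cᵒᵖ ⥤ SSet.{w}) where
  obj S := S.toPresheaf
  map h := homOfLE (leOfHom h)

def coconeOfMonotone (S : ℕ →o SubSimplicialPresheaf F) :
    Cocone (S.monotone.functor ⋙ toPresheafFunctor) where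
  pt := F
  ι := { app n := (S n).ι }

noncomputable def isColimitCoconeOfMonotone (S : ℕ →o SubSimplicialPresheaf F)
    (hS : ∀ c a x, ∃ n, x ∈ (S n).obj c a) : IsColimit (coconeOfMonotone S) := by
  refine evaluationJointlyReflectsColimits _ fun c =>
    evaluationJointlyReflectsColimits _ fun a => ?_
  refine Types.FilteredColimit.isColimitOf _ _ (fun x => ?_) fun i j xi xj h => ?_
  · obtain ⟨n, hn⟩ := hS c a x
    exact ⟨n, ⟨x, hn⟩, rfl⟩
  · exact ⟨max i j, CategoryTheory.homOfLE (le_max_left i j),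
      CategoryTheory.homOfLE (le_max_right i j), Subtype.ext h⟩

end SubSimplicialPresheaf

lemma isIso_of_bijective_app_app {D E : Type*} [Category D] [Category E]
    {G H : D ⥤ E ⥤ Type w} (f : G ⟶ H) (hf : ∀ c a, Function.Bijective ((f.app c).app a)) :
    IsIso f := by
  have (c : D) : IsIso (f.app c) := by
    have (a : E) := (isIso_iff_bijective _).2 (hf c a)
    exact NatIso.isIso_of_isIso_app _
  exact NatIso.isIso_of_isIso_app f

lemma surjective_toOrderHom_of_target_zero {a : SimplexCategory} (σ : a ⟶ ⦋0⦌) :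
    Function.Surjective σ.toOrderHom :=
  fun _ => ⟨0, Subsingleton.elim (α := Fin 1) _ _⟩

namespace FreeDegeneracies

variable {C : Type w} [SmallCategory C] {F : Cᵒᵖ ⥤ SSet.{w}} (fd : FreeDegeneracies F)

def simplex {c : Cᵒᵖ} {a : SimplexCategory} {m : ℕ} (θ : a ⟶ ⦋m⦌) (y : (fd.N m).obj c) :
    (F.obj c).obj (op a) :=
  (F.obj c).map θ.op ((fd.ι m).app c y)

def fromSigma (c : Cᵒᵖ) (a : SimplexCategoryᵒᵖ)
    (p : Σ s : SurjIndex.{w} a.unop.len, (fd.N s.1.down).obj c) : (F.obj c).obj a :=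
  fd.simplex p.1.2.1 p.2

lemma bijective_fromSigma (c : Cᵒᵖ) (a : SimplexCategoryᵒᵖ) :
    Function.Bijective (fd.fromSigma c a) := by
  let cofan := Cofan.mk _ fun s : SurjIndex.{w} a.unop.len => fd.ι s.1.down ≫ levelOp F s.2.1
  have : IsIso ((colimit.isColimit _).desc cofan) := fd.iso a.unop.len
  exact (Cofan.nonempty_isColimit_iff_bijective_fromSigma _).1
    ⟨isColimitCofanMkObjOfIsColimit ((evaluation _ _).obj c) _ _
      (IsColimit.ofPointIso (colimit.isColimit _) : IsColimit cofan)⟩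

/-- The `n` of the unique decomposition `x = σ^* y` with `σ : [k] ↠ [n]` and `y ∈ N_n`. -/
noncomputable def dim {c : Cᵒᵖ} {a : SimplexCategoryᵒᵖ} (x : (F.obj c).obj a) : ℕ :=
  ((Equiv.ofBijective _ (fd.bijective_fromSigma c a)).symm x).1.1.down

lemma dim_fromSigma {c : Cᵒᵖ} {a : SimplexCategoryᵒᵖ} (p) :
    fd.dim (fd.fromSigma c a p) = p.1.1.down := by
  simp only [dim, Equiv.ofBijective_symm_apply_apply]

section

variable {c : Cᵒᵖ} {a : SimplexCategory} {m : ℕ}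

lemma map_simplex {b : SimplexCategoryᵒᵖ} (α : op a ⟶ b) (θ : a ⟶ ⦋m⦌) (y : (fd.N m).obj c) :
    (F.obj c).map α (fd.simplex θ y) = fd.simplex (α.unop ≫ θ) y :=
  ((F.obj c).map_comp_apply _ _ _).symm

lemma app_simplex {c' : Cᵒᵖ} (g : c ⟶ c') (θ : a ⟶ ⦋m⦌) (y : (fd.N m).obj c) :
    (F.map g).app (op a) (fd.simplex θ y) = fd.simplex θ ((fd.N m).map g y) := by
  rw [simplex, simplex, NatTrans.naturality_apply (fd.ι m) g y]
  exact NatTrans.naturality_apply (F.map g) _ _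

lemma exists_simplex_eq (x : (F.obj c).obj (op a)) :
    ∃ (n : ℕ) (σ : a ⟶ ⦋n⦌) (_ : Function.Surjective σ.toOrderHom) (y : (fd.N n).obj c),
      fd.simplex σ y = x := by
  obtain ⟨⟨⟨⟨n⟩, σ, hσ⟩, y⟩, hx⟩ := (fd.bijective_fromSigma c (op a)).2 x
  exact ⟨n, σ, hσ, y, hx⟩

lemma simplex_injective {σ σ' : a ⟶ ⦋m⦌} (hσ : Function.Surjective σ.toOrderHom)
    (hσ' : Function.Surjective σ'.toOrderHom) {y y' : (fd.N m).obj c}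
    (h : fd.simplex σ y = fd.simplex σ' y') : σ = σ' ∧ y = y' := by
  have := (fd.bijective_fromSigma c (op a)).1
    (a₁ := ⟨⟨⟨m⟩, σ, hσ⟩, y⟩) (a₂ := ⟨⟨⟨m⟩, σ', hσ'⟩, y'⟩) h
  obtain ⟨h₁, h₂⟩ := Sigma.mk.inj_iff.1 this
  obtain ⟨-, h₃⟩ := Sigma.mk.inj_iff.1 h₁
  exact ⟨congrArg Subtype.val (eq_of_heq h₃), eq_of_heq h₂⟩

lemma dim_simplex_of_surjective {σ : a ⟶ ⦋m⦌} (hσ : Function.Surjective σ.toOrderHom)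
    (y : (fd.N m).obj c) : fd.dim (fd.simplex σ y) = m :=
  fd.dim_fromSigma (a := op a) ⟨⟨⟨m⟩, σ, hσ⟩, y⟩

lemma dim_simplex_comp_le {b : SimplexCategory} (φ : a ⟶ b) (i : b ⟶ ⦋m⦌)
    (y : (fd.N m).obj c) : fd.dim (fd.simplex (φ ≫ i) y) ≤ b.len := by
  obtain ⟨k, σ, hσ, z, hz⟩ := fd.exists_simplex_eq (fd.simplex (image.ι φ ≫ i) y)
  have : Epi σ := SimplexCategory.epi_iff_surjective.2 hσ
  have hfac : fd.simplex (φ ≫ i) y = fd.simplex (factorThruImage φ ≫ σ) z := by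
    rw [← image.fac_assoc φ i]
    exact (fd.map_simplex (factorThruImage φ).op _ y).symm.trans
      ((congrArg _ hz.symm).trans (fd.map_simplex _ σ z))
  rw [hfac, fd.dim_simplex_of_surjective (SimplexCategory.epi_iff_surjective.1 inferInstance)]
  exact (SimplexCategory.len_le_of_epi σ).trans (SimplexCategory.len_le_of_mono (image.ι φ))

lemma dim_simplex_le (θ : a ⟶ ⦋m⦌) (y : (fd.N m).obj c) : fd.dim (fd.simplex θ y) ≤ m := by
  simpa using fd.dim_simplex_comp_le θ (𝟙 _) y

lemma dim_simplex_le_iff {n : ℕ} {θ : a ⟶ ⦋n + 1⦌} (y : (fd.N (n + 1)).obj c) :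
    fd.dim (fd.simplex θ y) ≤ n ↔ ¬ Function.Surjective θ.toOrderHom := by
  refine ⟨fun h hθ => ?_, fun hθ => ?_⟩
  · rw [fd.dim_simplex_of_surjective hθ] at h
    exact n.not_succ_le_self h
  · obtain ⟨i, θ', rfl⟩ := SimplexCategory.eq_comp_δ_of_not_surjective θ hθ
    simpa using fd.dim_simplex_comp_le θ' (SimplexCategory.δ i) y

lemma dim_map_le {b : SimplexCategoryᵒᵖ} (α : op a ⟶ b) (x : (F.obj c).obj (op a)) :
    fd.dim ((F.obj c).map α x) ≤ fd.dim x := by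
  obtain ⟨k, σ, hσ, y, rfl⟩ := fd.exists_simplex_eq x
  rw [fd.map_simplex, fd.dim_simplex_of_surjective hσ]
  exact fd.dim_simplex_le _ y

lemma dim_app {c' : Cᵒᵖ} (g : c ⟶ c') (x : (F.obj c).obj (op a)) :
    fd.dim ((F.map g).app (op a) x) = fd.dim x := by
  obtain ⟨k, σ, hσ, y, rfl⟩ := fd.exists_simplex_eq x
  rw [fd.app_simplex, fd.dim_simplex_of_surjective hσ, fd.dim_simplex_of_surjective hσ]

end

noncomputable def skeleton : ℕ →o SubSimplicialPresheaf F where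
  toFun n :=
    { obj _ _ := {x | fd.dim x ≤ n}
      map_mem _ _ _ α x hx := (fd.dim_map_le α x).trans hx
      app_mem g _ x hx := (fd.dim_app g x).trans_le hx }
  monotone' _ _ h _ _ _ hx := le_trans hx h

lemma mem_skeleton {n : ℕ} {c : Cᵒᵖ} {a : SimplexCategoryᵒᵖ} {x : (F.obj c).obj a} :
    x ∈ (fd.skeleton n).obj c a ↔ fd.dim x ≤ n :=
  Iff.rfl

def cellMap (m : ℕ) : tensorUC ((discretize C).obj (fd.N m)) Δ[m] ⟶ F where
  app c :=
    { app a := TypeCat.ofHom fun q => fd.simplex q.2.down q.1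
      naturality a b α := by ext q; exact (fd.map_simplex α q.2.down q.1).symm }
  naturality c c' g := by ext a q; exact (fd.app_simplex g q.2.down q.1).symm

noncomputable def characteristicMap (n : ℕ) :
    tensorUC ((discretize C).obj (fd.N (n + 1))) Δ[n + 1] ⟶ (fd.skeleton (n + 1)).toPresheaf :=
  (fd.skeleton (n + 1)).lift (fd.cellMap (n + 1)) fun _ _ q => fd.dim_simplex_le q.2.down q.1

noncomputable def attachingMap (n : ℕ) :
    tensorUC ((discretize C).obj (fd.N (n + 1))) ∂Δ[n + 1] ⟶ (fd.skeleton n).toPresheaf :=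
  (fd.skeleton n).lift (tensorUCMap (𝟙 _) ∂Δ[n + 1].ι ≫ fd.cellMap (n + 1))
    fun _ _ q => (fd.dim_simplex_le_iff q.1).2 q.2.2

def vertexMap : (discretize C).obj (fd.N 0) ⟶ F where
  app c :=
    { app a := TypeCat.ofHom fun y => fd.simplex (SimplexCategory.const a.unop ⦋0⦌ 0) y
      naturality a b α := by
        ext y
        exact (congrArg (fd.simplex · y) (SimplexCategory.eq_const_to_zero _)).symm.trans
          (fd.map_simplex α _ y).symm }
  naturality c c' g := by ext a y; exact (fd.app_simplex g _ y).symm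

lemma bijective_vertexMap_app_app (c : Cᵒᵖ) (a : SimplexCategoryᵒᵖ) :
    Function.Bijective (((fd.skeleton 0).lift fd.vertexMap
      fun _ _ y => fd.dim_simplex_le _ y).app c |>.app a) := by
  refine ⟨fun y y' h => ?_, fun ⟨x, hx⟩ => ?_⟩
  · exact (fd.simplex_injective (surjective_toOrderHom_of_target_zero _)
      (surjective_toOrderHom_of_target_zero _) (congrArg Subtype.val h)).2
  · obtain ⟨k, σ, hσ, y, rfl⟩ := fd.exists_simplex_eq (a := a.unop) x
    obtain rfl : k = 0 := Nat.le_zero.1 ((fd.dim_simplex_of_surjective hσ y).symm.trans_le hx)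
    exact ⟨y, Subtype.ext (congrArg (fd.simplex · y) (SimplexCategory.eq_const_to_zero σ).symm)⟩

noncomputable def zeroSkeletonIso : (fd.skeleton 0).toPresheaf ≅ (discretize C).obj (fd.N 0) :=
  have := isIso_of_bijective_app_app _ fd.bijective_vertexMap_app_app
  (asIso ((fd.skeleton 0).lift fd.vertexMap fun _ _ y => fd.dim_simplex_le _ y)).symm

lemma isPushout_skeleton (n : ℕ) :
    IsPushout (tensorUCMap (𝟙 ((discretize C).obj (fd.N (n + 1)))) ∂Δ[n + 1].ι)
      (fd.attachingMap n) (fd.characteristicMap n)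
      (SubSimplicialPresheaf.homOfLE (fd.skeleton.monotone n.le_succ)) := by
  refine IsPushout.of_forall_isPushout_app fun c =>
    IsPushout.of_forall_isPushout_app fun a => ?_
  have := (mono_iff_injective _).2
    ((fd.skeleton n).injective_homOfLE_app_app (fd.skeleton.monotone n.le_succ) c a)
  have surjective_of_notMem {q} (hq : q ∉ Set.range (((tensorUCMap (𝟙 ((discretize C).obj
      (fd.N (n + 1)))) ∂Δ[n + 1].ι).app c).app a)) : Function.Surjective q.2.down.toOrderHom :=
    of_not_not fun hs => hq ⟨(q.1, ⟨q.2, hs⟩), rfl⟩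
  refine IsPushout.flip (Types.isPushout_of_isPullback_of_mono' ?_ ?_ ?_)
  · refine (Types.isPullback_iff _ _ _ _).2 ⟨rfl, fun q q' h => ?_, fun x q h => ?_⟩
    · exact Prod.ext (congrArg Prod.fst h.2 :) (Subtype.ext (congrArg Prod.snd h.2 :))
    · have hx : fd.simplex q.2.down q.1 = x.1 := (Subtype.ext_iff.1 h).symm
      have hq : ¬ Function.Surjective q.2.down.toOrderHom :=
        (fd.dim_simplex_le_iff q.1).1 (hx ▸ x.2)
      exact ⟨(q.1, ⟨q.2, hq⟩), Subtype.ext hx, rfl⟩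
  · refine Set.eq_univ_of_forall fun ⟨x, hx⟩ => ?_
    obtain ⟨k, σ, hσ, y, rfl⟩ := fd.exists_simplex_eq (a := a.unop) x
    rw [mem_skeleton, fd.dim_simplex_of_surjective hσ] at hx
    rcases hx.lt_or_eq with hk | rfl
    · exact Or.inl ⟨⟨_, fd.mem_skeleton.2 ((fd.dim_simplex_of_surjective hσ y).trans_le
        (Nat.le_of_lt_succ hk))⟩, rfl⟩
    · exact Or.inr ⟨(y, ⟨σ⟩), rfl⟩
  · intro q q' hq hq' h
    obtain ⟨hσ, hy⟩ := fd.simplex_injective (surjective_of_notMem hq) (surjective_of_notMem hq')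
      (Subtype.ext_iff.1 h)
    exact Prod.ext hy (ULift.ext _ _ hσ)

end FreeDegeneracies

end Paper

/-- If a simplicial presheaf `F` has free degeneracies with
splitting presheaves `N_k`, then `F` is the colimit of a sequence of skeleta
`sk₀F → sk₁F → ⋯` where `sk₀F = N₀` and each `sk_nF` is obtained from
`sk_{n-1}F` by pushing out `N_n ⊗ ∂Δⁿ → N_n ⊗ Δⁿ`. -/
theorem statement15 {C : Type w} [SmallCategory C] (F : Cᵒᵖ ⥤ SSet.{w})
    (fd : Paper.FreeDegeneracies F) :
    ∃ G : ℕ ⥤ (Cᵒᵖ ⥤ SSet.{w}),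
      Nonempty (G.obj 0 ≅ (Paper.discretize C).obj (fd.N 0)) ∧
      (∀ n : ℕ,
        ∃ (att : Paper.tensorUC ((Paper.discretize C).obj (fd.N (n+1)))
            (SSet.boundary.{w} (n+1)).toSSet ⟶ G.obj n)
          (top : Paper.tensorUC ((Paper.discretize C).obj (fd.N (n+1)))
            (SSet.stdSimplex.obj (SimplexCategory.mk (n+1))) ⟶ G.obj (n+1)),
          IsPushout (Paper.tensorUCMap (𝟙 _) (SSet.boundary.{w} (n+1)).ι) att
            top (G.map (homOfLE (Nat.le_succ n)))) ∧
      ∃ (coc : Limits.Cocone G) (_ : Nonempty (Limits.IsColimit coc)),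
        Nonempty (coc.pt ≅ F) :=
  ⟨_, ⟨fd.zeroSkeletonIso⟩,
    fun n => ⟨fd.attachingMap n, fd.characteristicMap n, fd.isPushout_skeleton n⟩,
    _, ⟨Paper.SubSimplicialPresheaf.isColimitCoconeOfMonotone fd.skeleton
      fun _ _ x => ⟨fd.dim x, fd.mem_skeleton.2 le_rfl⟩⟩, ⟨Iso.refl F⟩⟩
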